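/- Assume every hospital's preference is substitutable. Then the doctor-optimal rule φ̄ (the rule that assigns to each doctor preference profile the output of the doctor-proposing deferred acceptance algorithm) is not obviously manipulable: no doctor has an obvious manipulation of φ̄ at any preference. -/

import Mathlib

set_option linter.unusedSectionVars false

namespace Matching

open Finset

/-- A many-to-one matching market with contracts: each contract `x` involves exactly one
doctor `xD x` and one hospital `xH x`; each hospital `h` has a fixed antisymmetric,
transitive and complete preference `prH h`, modelled as a linear order on sets of
contracts (only its comparisons between allocations of contracts involving `h` matter). -/
structure Market (D H X : Type*) where
  xD : X → D
  xH : X → H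
  prH : H → LinearOrder (Finset X)

/-- A doctor's preference: an antisymmetric, transitive and complete preference, modelled
as a linear order on sets of contracts (only comparisons between `∅` and singletons of
contracts involving the doctor matter). -/
abbrev Pref (X : Type*) := LinearOrder (Finset X)

/-- A profile of doctors' preferences. -/
abbrev Profile (D X : Type*) := D → Pref X

variable {D H X : Type*}
variable [DecidableEq D] [DecidableEq H] [DecidableEq X] [Fintype D] [Fintype H] [Fintype X]

/-- `Y_d` : the contracts in `Y` involving doctor `d`. -/
def docPart (M : Market D H X) (Y : Finset X) (d : D) : Finset X :=
  Y.filter fun x => M.xD x = d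

/-- `Y_h` : the contracts in `Y` involving hospital `h`. -/
def hospPart (M : Market D H X) (Y : Finset X) (h : H) : Finset X :=
  Y.filter fun x => M.xH x = h

/-- An allocation: distinct contracts involve distinct doctors. -/
def IsAllocation (M : Market D H X) (Z : Finset X) : Prop :=
  ∀ x ∈ Z, ∀ y ∈ Z, M.xD x = M.xD y → x = y

/-- `A(Y)` : the allocations contained in `Y`. -/
def allocs (M : Market D H X) (Y : Finset X) : Finset (Finset X) :=
  Y.powerset.filter fun Z => ∀ x ∈ Z, ∀ y ∈ Z, M.xD x = M.xD y → x = y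

lemma empty_mem_allocs (M : Market D H X) (Y : Finset X) : ∅ ∈ allocs M Y := by
  simp [allocs]

/-- The best allocation contained in `Y` according to the linear order `pr`. -/
def bestAlloc (M : Market D H X) (pr : Pref X) (Y : Finset X) : Finset X :=
  @Finset.max' _ pr (allocs M Y) ⟨∅, empty_mem_allocs M Y⟩

/-- `C_h(Y)` : hospital `h`'s choice set from `Y` (the `≻_h`-maximum of `A(Y_h)`). -/
def Ch (M : Market D H X) (h : H) (Y : Finset X) : Finset X :=
  bestAlloc M (M.prH h) (hospPart M Y h)

/-- `C_d(P_d, Y)` : doctor `d`'s choice set from `Y` (the `P_d`-maximum of `A(Y_d)`). -/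
def Cd (M : Market D H X) (Pd : Pref X) (d : D) (Y : Finset X) : Finset X :=
  bestAlloc M Pd (docPart M Y d)

/-- `C_H(Y) = ∪_{h ∈ H} C_h(Y)`. -/
def CH (M : Market D H X) (Y : Finset X) : Finset X :=
  univ.biUnion fun h => Ch M h Y

/-- `C_D(Y) = ∪_{d ∈ D} C_d(Y)`. -/
def CD (M : Market D H X) (P : Profile D X) (Y : Finset X) : Finset X :=
  univ.biUnion fun d => Cd M (P d) d Y

/-- Substitutability of hospital `h`'s preference: `x ∈ C_h(W)` and `x ∈ Y_h ⊆ W_h`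
imply `x ∈ C_h(Y)`. -/
def Substitutable (M : Market D H X) (h : H) : Prop :=
  ∀ W Y : Finset X, hospPart M Y h ⊆ hospPart M W h →
    ∀ x ∈ hospPart M Y h, x ∈ Ch M h W → x ∈ Ch M h Y

/-- The sets `X^t` of still-available contracts in the doctor-proposing deferred
acceptance algorithm (0-based: index `t` corresponds to iteration `t+1`). -/
def DDAsets (M : Market D H X) (P : Profile D X) : ℕ → Finset X
  | 0 => univ
  | t + 1 =>
      DDAsets M P t \ (CD M P (DDAsets M P t) \ CH M (CD M P (DDAsets M P t)))

/-- `O^t` : the offers made by the doctors at iteration `t` of D-DA (0-based). -/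
def offers (M : Market D H X) (P : Profile D X) (t : ℕ) : Finset X :=
  CD M P (DDAsets M P t)

/-- `O_A^t = ∪_{k ≤ t} O^k` : the accumulated offers up to iteration `t` (0-based). -/
def accOffers (M : Market D H X) (P : Profile D X) (t : ℕ) : Finset X :=
  (Finset.range (t + 1)).biUnion fun k => offers M P k

/-- D-DA has stopped at iteration `t`: all offers are accepted. -/
def DDAstopped (M : Market D H X) (P : Profile D X) (t : ℕ) : Prop :=
  CH M (offers M P t) = offers M P t

/-- The (0-based) last iteration of D-DA, i.e. `T - 1` where `T` is the number of
iterations of D-DA. -/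
noncomputable def DDAlast (M : Market D H X) (P : Profile D X) : ℕ :=
  sInf {t | DDAstopped M P t}

/-- The output of D-DA (the algorithm provably stops by iteration `Fintype.card X`,
and once stopped the offer sets stay constant). -/
def DDAoutput (M : Market D H X) (P : Profile D X) : Finset X :=
  CH M (offers M P (Fintype.card X))

/-- The doctor-optimal rule `φ̄`, giving doctor `d`'s outcome `φ̄_d(P)` (an element of
`A(𝐗_d)`, i.e. `∅` or a singleton). -/
def docOpt (M : Market D H X) (P : Profile D X) (d : D) : Finset X :=
  docPart M (DDAoutput M P) d

/-- The sets `X^t` of still-available contracts in the hospital-proposing deferred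
acceptance algorithm (0-based). -/
def HDAsets (M : Market D H X) (P : Profile D X) : ℕ → Finset X
  | 0 => univ
  | t + 1 =>
      HDAsets M P t \ (CH M (HDAsets M P t) \ CD M P (CH M (HDAsets M P t)))

/-- The offers made by the hospitals at iteration `t` of H-DA (0-based). -/
def hOffers (M : Market D H X) (P : Profile D X) (t : ℕ) : Finset X :=
  CH M (HDAsets M P t)

/-- The output of H-DA. -/
def HDAoutput (M : Market D H X) (P : Profile D X) : Finset X :=
  CD M P (hOffers M P (Fintype.card X))

/-- The hospital-optimal rule `φ̲`, giving doctor `d`'s outcome `φ̲_d(P)`. -/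
def hospOpt (M : Market D H X) (P : Profile D X) (d : D) : Finset X :=
  docPart M (HDAoutput M P) d

/-- The option set `O^φ(P_d)` left open by `P_d` at the rule `φ`. -/
def optionSet (rule : Profile D X → D → Finset X) (d : D) (Pd : Pref X) :
    Set (Finset X) :=
  {S | ∃ P : Profile D X, P d = Pd ∧ S = rule P d}

open scoped Classical in
/-- `W_d(pr, S)` : the `pr`-worst element of the (finite) set `S` of outcomes. -/
noncomputable def worstIn (pr : Pref X) (S : Set (Finset X)) : Finset X :=
  if h : S.Nonempty then
    @Finset.min' _ pr (Set.toFinite S).toFinset ((Set.Finite.toFinset_nonempty _).mpr h)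
  else ∅

open scoped Classical in
/-- The `pr`-best element of the (finite) set `S` of outcomes. -/
noncomputable def bestIn (pr : Pref X) (S : Set (Finset X)) : Finset X :=
  if h : S.Nonempty then
    @Finset.max' _ pr (Set.toFinite S).toFinset ((Set.Finite.toFinset_nonempty _).mpr h)
  else ∅

/-- `P'_d` is a manipulation of the rule at `P_d` : for some subprofile of the other
doctors, reporting `P'_d` gives a strictly `P_d`-better outcome than truth-telling. -/
def IsManip (rule : Profile D X → D → Finset X) (d : D) (Pd P'd : Pref X) : Prop :=
  ∃ P : Profile D X, P d = Pd ∧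
    Pd.lt (rule P d) (rule (Function.update P d P'd) d)

/-- `P'_d` is an obvious manipulation of the rule at `P_d`. -/
def IsObviousManip (rule : Profile D X → D → Finset X) (d : D) (Pd P'd : Pref X) :
    Prop :=
  IsManip rule d Pd P'd ∧
    (Pd.lt (worstIn Pd (optionSet rule d Pd)) (worstIn Pd (optionSet rule d P'd)) ∨
     Pd.lt (bestIn Pd (optionSet rule d Pd)) (bestIn Pd (optionSet rule d P'd)))

/-- A rule is not obviously manipulable (NOM). -/
def NOM (rule : Profile D X → D → Finset X) : Prop :=
  ∀ (d : D) (Pd P'd : Pref X), ¬ IsObviousManip rule d Pd P'd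

/-- A rule is obviously manipulable (OM). -/
def OM (rule : Profile D X → D → Finset X) : Prop :=
  ∃ (d : D) (Pd P'd : Pref X), IsObviousManip rule d Pd P'd

/-- `Y` is a stable allocation at the profile `P` : it is an individually rational
allocation and admits no blocking contract. -/
def IsStable (M : Market D H X) (P : Profile D X) (Y : Finset X) : Prop :=
  IsAllocation M Y ∧ CD M P Y = Y ∧ CH M Y = Y ∧
    ∀ x : X, x ∉ Y →
      ¬ (x ∈ Cd M (P (M.xD x)) (M.xD x) (insert x Y) ∧
         x ∈ Ch M (M.xH x) (insert x Y))

/-- `⌈kq⌉` where `k` is the number of stable allocations at `P`. -/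
noncomputable def quantileIndex (M : Market D H X) (P : Profile D X) (q : ℝ) : ℕ :=
  ⌈(Set.ncard {Y : Finset X | IsStable M P Y} : ℝ) * q⌉₊

/-- `Z` is doctor `d`'s `⌈kq⌉`-th best outcome (according to `P d`) among the `k` stable
allocations at `P` : it is the outcome of some stable allocation, strictly fewer than
`⌈kq⌉` stable allocations give `d` a strictly better outcome, and at least `⌈kq⌉` stable
allocations give `d` a weakly better outcome. -/
def IsQuantileOutcome (M : Market D H X) (P : Profile D X) (q : ℝ) (d : D)
    (Z : Finset X) : Prop :=
  (∃ Y : Finset X, IsStable M P Y ∧ docPart M Y d = Z) ∧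
    Set.ncard {Y : Finset X | IsStable M P Y ∧ (P d).lt Z (docPart M Y d)} <
      quantileIndex M P q ∧
    quantileIndex M P q ≤
      Set.ncard {Y : Finset X | IsStable M P Y ∧ (P d).le Z (docPart M Y d)}

/-!
Fix a doctor `d` and an allocation `W` of the other doctors that every hospital accepts in
full. If each other doctor insists on his contract in `W`, then whatever `d` reports, D-DA
gives him his most preferred outcome among those attainable against `W`: nothing, or a
contract of his that its hospital still chooses when offered on top of `W`.

Best case: by substitutability, every outcome `d` ever receives is attainable against
`W = ∅`, and truth-telling against `∅` already yields the best of them. Worst case: take a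
profile realising truth-telling's worst outcome and let `W` be the contracts held right after
`d`'s last rejection; no outcome attainable against `W` beats the worst case, yet every
report obtains one of them against `W`.
-/

section Choice

variable {M : Market D H X}

lemma mem_allocs {Y Z : Finset X} : Z ∈ allocs M Y ↔ Z ⊆ Y ∧ IsAllocation M Z := by
  simp [allocs, IsAllocation]

lemma IsAllocation.mono {Z Z' : Finset X} (hZ : IsAllocation M Z) (h : Z' ⊆ Z) :
    IsAllocation M Z' :=
  fun x hx y hy => hZ x (h hx) y (h hy)

lemma bestAlloc_mem (pr : Pref X) (Y : Finset X) : bestAlloc M pr Y ∈ allocs M Y :=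
  @Finset.max'_mem _ pr _ _

lemma le_bestAlloc (pr : Pref X) {Y Z : Finset X} (hZ : Z ∈ allocs M Y) :
    pr.le Z (bestAlloc M pr Y) :=
  @Finset.le_max' _ pr _ _ hZ

lemma bestAlloc_eq_of_forall_le (pr : Pref X) {Y S : Finset X} (hS : S ∈ allocs M Y)
    (hmax : ∀ Z ∈ allocs M Y, pr.le Z S) : bestAlloc M pr Y = S :=
  pr.le_antisymm _ _ (hmax _ (bestAlloc_mem pr Y)) (le_bestAlloc pr hS)

lemma bestAlloc_subset (pr : Pref X) (Y : Finset X) : bestAlloc M pr Y ⊆ Y :=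
  (mem_allocs.mp (bestAlloc_mem pr Y)).1

lemma isAllocation_bestAlloc (pr : Pref X) (Y : Finset X) : IsAllocation M (bestAlloc M pr Y) :=
  (mem_allocs.mp (bestAlloc_mem pr Y)).2

lemma bestAlloc_eq_of_subset (pr : Pref X) {Y Y' : Finset X} (hY' : Y' ⊆ Y)
    (hbest : bestAlloc M pr Y ⊆ Y') : bestAlloc M pr Y' = bestAlloc M pr Y :=
  pr.le_antisymm _ _
    (le_bestAlloc pr (mem_allocs.mpr ⟨(bestAlloc_subset pr Y').trans hY',
      isAllocation_bestAlloc pr Y'⟩))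
    (le_bestAlloc pr (mem_allocs.mpr ⟨hbest, isAllocation_bestAlloc pr Y⟩))

lemma mem_docPart {Y : Finset X} {d : D} {x : X} :
    x ∈ docPart M Y d ↔ x ∈ Y ∧ M.xD x = d :=
  Finset.mem_filter

lemma mem_hospPart {Y : Finset X} {h : H} {x : X} :
    x ∈ hospPart M Y h ↔ x ∈ Y ∧ M.xH x = h :=
  Finset.mem_filter

lemma docPart_mono {Y Y' : Finset X} (hY : Y ⊆ Y') (d : D) : docPart M Y d ⊆ docPart M Y' d :=
  Finset.filter_subset_filter _ hY

lemma notMem_of_docPart_eq_empty {W : Finset X} {d : D} (hWd : docPart M W d = ∅) {x : X}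
    (hxd : M.xD x = d) : x ∉ W :=
  fun hxW => Finset.notMem_empty x (hWd ▸ mem_docPart.mpr ⟨hxW, hxd⟩)

lemma hospPart_mono {Y Y' : Finset X} (hY : Y ⊆ Y') (h : H) :
    hospPart M Y h ⊆ hospPart M Y' h :=
  Finset.filter_subset_filter _ hY

lemma Cd_subset_docPart (pr : Pref X) (d : D) (Y : Finset X) : Cd M pr d Y ⊆ docPart M Y d :=
  bestAlloc_subset pr _

lemma Cd_subset (pr : Pref X) (d : D) (Y : Finset X) : Cd M pr d Y ⊆ Y :=
  (Cd_subset_docPart pr d Y).trans (Finset.filter_subset _ _)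

lemma xD_of_mem_Cd {pr : Pref X} {d : D} {Y : Finset X} {x : X} (hx : x ∈ Cd M pr d Y) :
    M.xD x = d :=
  (mem_docPart.mp (Cd_subset_docPart pr d Y hx)).2

lemma empty_le_Cd (pr : Pref X) (d : D) (Y : Finset X) : pr.le ∅ (Cd M pr d Y) :=
  le_bestAlloc pr (empty_mem_allocs M _)

lemma singleton_le_Cd (pr : Pref X) {d : D} {Y : Finset X} {c : X} (hc : c ∈ Y)
    (hcd : M.xD c = d) : pr.le {c} (Cd M pr d Y) :=
  le_bestAlloc pr (mem_allocs.mpr ⟨by simpa [mem_docPart] using ⟨hc, hcd⟩,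
    fun x hx y hy _ => by simp_all⟩)

lemma Cd_eq_singleton_of_mem {pr : Pref X} {d : D} {Y : Finset X} {c : X}
    (hc : c ∈ Cd M pr d Y) : Cd M pr d Y = {c} :=
  Finset.eq_singleton_iff_unique_mem.mpr ⟨hc, fun x hx =>
    isAllocation_bestAlloc pr _ x hx c hc ((xD_of_mem_Cd hx).trans (xD_of_mem_Cd hc).symm)⟩

lemma Cd_eq_empty_or_singleton (pr : Pref X) (d : D) (Y : Finset X) :
    Cd M pr d Y = ∅ ∨ ∃ c ∈ Y, M.xD c = d ∧ Cd M pr d Y = {c} := by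
  rcases (Cd M pr d Y).eq_empty_or_nonempty with h | ⟨c, hc⟩
  · exact Or.inl h
  · exact Or.inr ⟨c, Cd_subset pr d Y hc, xD_of_mem_Cd hc, Cd_eq_singleton_of_mem hc⟩

lemma Cd_eq_of_subset (pr : Pref X) (d : D) {Y Y' : Finset X} (hY : Y ⊆ Y')
    (hCd : Cd M pr d Y' ⊆ Y) : Cd M pr d Y = Cd M pr d Y' :=
  bestAlloc_eq_of_subset pr (docPart_mono hY d) fun _ hx =>
    mem_docPart.mpr ⟨hCd hx, xD_of_mem_Cd hx⟩

lemma Ch_subset_hospPart (h : H) (Y : Finset X) : Ch M h Y ⊆ hospPart M Y h :=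
  bestAlloc_subset _ _

lemma Ch_subset (h : H) (Y : Finset X) : Ch M h Y ⊆ Y :=
  (Ch_subset_hospPart h Y).trans (Finset.filter_subset _ _)

lemma xH_of_mem_Ch {h : H} {Y : Finset X} {x : X} (hx : x ∈ Ch M h Y) : M.xH x = h :=
  (mem_hospPart.mp (Ch_subset_hospPart h Y hx)).2

lemma Ch_eq_of_subset (h : H) {Y Y' : Finset X} (hY : Y' ⊆ Y) (hCh : Ch M h Y ⊆ Y') :
    Ch M h Y' = Ch M h Y :=
  bestAlloc_eq_of_subset _ (hospPart_mono hY h) fun _ hx =>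
    mem_hospPart.mpr ⟨hCh hx, xH_of_mem_Ch hx⟩

lemma Ch_insert_of_ne {h : H} (Y : Finset X) {z : X} (hz : M.xH z ≠ h) :
    Ch M h (insert z Y) = Ch M h Y := by
  simp only [Ch, hospPart, Finset.filter_insert, hz, if_false]

lemma Ch_insert_of_notMem {h : H} {Y : Finset X} {z : X} (hz : z ∉ Ch M h (insert z Y)) :
    Ch M h (insert z Y) = Ch M h Y :=
  (Ch_eq_of_subset h (Finset.subset_insert z Y) fun x hx =>
    (Finset.mem_insert.mp (Ch_subset h _ hx)).resolve_left (by rintro rfl; exact hz hx)).symm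

lemma mem_CH {Y : Finset X} {x : X} : x ∈ CH M Y ↔ x ∈ Ch M (M.xH x) Y := by
  refine ⟨fun hx => ?_, fun hx => Finset.mem_biUnion.mpr ⟨_, Finset.mem_univ _, hx⟩⟩
  obtain ⟨h, -, hxh⟩ := Finset.mem_biUnion.mp hx
  rwa [xH_of_mem_Ch hxh]

lemma CH_subset (Y : Finset X) : CH M Y ⊆ Y :=
  fun _ hx => Ch_subset _ _ (mem_CH.mp hx)

lemma CH_empty : CH M (∅ : Finset X) = ∅ :=
  Finset.subset_empty.mp (CH_subset ∅)

lemma CH_idem (Y : Finset X) : CH M (CH M Y) = CH M Y := by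
  have hCh : ∀ h, Ch M h (CH M Y) = Ch M h Y := fun h =>
    Ch_eq_of_subset h (CH_subset Y) fun x hx => mem_CH.mpr (by rwa [xH_of_mem_Ch hx])
  ext x
  rw [mem_CH, mem_CH, hCh]

lemma CH_insert_of_notMem_Ch {Y : Finset X} {z : X} (hz : z ∉ Ch M (M.xH z) (insert z Y)) :
    CH M (insert z Y) = CH M Y := by
  ext x
  rw [mem_CH, mem_CH]
  by_cases hxz : M.xH z = M.xH x
  · rw [← hxz, Ch_insert_of_notMem hz]
  · rw [Ch_insert_of_ne Y hxz]

lemma mem_CD {P : Profile D X} {Y : Finset X} {x : X} :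
    x ∈ CD M P Y ↔ x ∈ Cd M (P (M.xD x)) (M.xD x) Y := by
  refine ⟨fun hx => ?_, fun hx => Finset.mem_biUnion.mpr ⟨_, Finset.mem_univ _, hx⟩⟩
  obtain ⟨e, -, hxe⟩ := Finset.mem_biUnion.mp hx
  rwa [xD_of_mem_Cd hxe]

lemma CD_subset (P : Profile D X) (Y : Finset X) : CD M P Y ⊆ Y :=
  fun _ hx => Cd_subset _ _ _ (mem_CD.mp hx)

lemma docPart_CD (P : Profile D X) (Y : Finset X) (d : D) :
    docPart M (CD M P Y) d = Cd M (P d) d Y := by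
  ext x
  rw [mem_docPart, mem_CD]
  exact ⟨fun ⟨hx, hxd⟩ => hxd ▸ hx,
    fun hx => ⟨(xD_of_mem_Cd hx).symm ▸ hx, xD_of_mem_Cd hx⟩⟩

lemma isAllocation_CD (P : Profile D X) (Y : Finset X) : IsAllocation M (CD M P Y) := by
  intro x hx y hy hxy
  rw [mem_CD] at hx hy
  rw [hxy] at hx
  exact Finset.mem_singleton.mp (Cd_eq_singleton_of_mem hy ▸ hx)

end Choice

section DeferredAcceptance

variable {M : Market D H X} {P : Profile D X}

lemma DDAsets_succ (t : ℕ) :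
    DDAsets M P (t + 1) = DDAsets M P t \ (offers M P t \ CH M (offers M P t)) :=
  rfl

lemma DDAsets_succ_subset (t : ℕ) : DDAsets M P (t + 1) ⊆ DDAsets M P t :=
  Finset.sdiff_subset

lemma offers_subset_DDAsets (t : ℕ) : offers M P t ⊆ DDAsets M P t :=
  CD_subset P _

lemma DDAsets_succ_eq_of_stopped {t : ℕ} (hs : DDAstopped M P t) :
    DDAsets M P (t + 1) = DDAsets M P t := by
  rw [DDAsets_succ, hs, Finset.sdiff_self, Finset.sdiff_empty]

lemma DDAsets_eq_of_stopped {t u : ℕ} (hs : DDAstopped M P t) (htu : t ≤ u) :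
    DDAsets M P u = DDAsets M P t := by
  induction u, htu using Nat.le_induction with
  | base => rfl
  | succ u _ ih =>
    have hsu : DDAstopped M P u := by unfold DDAstopped offers; rwa [ih]
    rw [DDAsets_succ_eq_of_stopped hsu, ih]

lemma card_DDAsets_succ_lt {t : ℕ} (hs : ¬ DDAstopped M P t) :
    (DDAsets M P (t + 1)).card < (DDAsets M P t).card := by
  obtain ⟨y, hy, hyCH⟩ := Finset.exists_of_ssubset
    ((CH_subset (offers M P t)).ssubset_of_ne hs)
  refine Finset.card_lt_card ⟨DDAsets_succ_subset t, fun h => ?_⟩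
  have := h (offers_subset_DDAsets t hy)
  simp [DDAsets_succ, hy, hyCH] at this

lemma DDAstopped_card (P : Profile D X) : DDAstopped M P (Fintype.card X) := by
  have hcard : ∀ t, (∀ s < t, ¬ DDAstopped M P s) →
      (DDAsets M P t).card + t ≤ Fintype.card X := by
    intro t
    induction t with
    | zero => intro _; simpa using Finset.card_le_univ _
    | succ t ih =>
      intro hns
      have := card_DDAsets_succ_lt (hns t t.lt_succ_self)
      have := ih fun s hs => hns s (hs.trans t.lt_succ_self)
      omega
  obtain ⟨s, hs, hstop⟩ : ∃ s < Fintype.card X + 1, DDAstopped M P s := by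
    by_contra! h
    have := hcard _ h
    omega
  unfold DDAstopped offers
  rwa [DDAsets_eq_of_stopped hstop (Nat.lt_succ_iff.mp hs)]

lemma docOpt_eq_of_stopped {u : ℕ} (hs : DDAstopped M P u) (d : D) :
    docOpt M P d = Cd M (P d) d (DDAsets M P u) := by
  have hN := DDAstopped_card (M := M) P
  have hX : DDAsets M P (Fintype.card X) = DDAsets M P u := by
    rcases le_total u (Fintype.card X) with h | h
    · exact DDAsets_eq_of_stopped hs h
    · exact (DDAsets_eq_of_stopped hN h).symm
  rw [docOpt, DDAoutput, hN, offers, docPart_CD, hX]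

lemma mem_offers_succ {t : ℕ} {y : X} (hy : y ∈ offers M P t)
    (hacc : y ∈ CH M (offers M P t)) :
    y ∈ offers M P (t + 1) := by
  have hCd := Cd_eq_singleton_of_mem (mem_CD.mp hy)
  have hyX : y ∈ DDAsets M P (t + 1) := by
    simp [DDAsets_succ, offers_subset_DDAsets t hy, hacc]
  have hCd1 : Cd M (P (M.xD y)) (M.xD y) (DDAsets M P (t + 1)) = {y} :=
    (Cd_eq_of_subset _ _ (DDAsets_succ_subset t)
      (by rwa [hCd, Finset.singleton_subset_iff])).trans hCd
  rw [offers, mem_CD, hCd1]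
  exact Finset.mem_singleton_self y

lemma exists_rejected_of_notMem_DDAsets {t : ℕ} {z : X} (hz : z ∉ DDAsets M P t) :
    ∃ j < t, z ∈ offers M P j ∧ z ∉ CH M (offers M P j) := by
  induction t with
  | zero => simp [DDAsets] at hz
  | succ t ih =>
    by_cases hzt : z ∈ DDAsets M P t
    · simp only [DDAsets_succ, Finset.mem_sdiff, hzt, true_and, not_not] at hz
      exact ⟨t, t.lt_succ_self, hz⟩
    · obtain ⟨j, hj, h⟩ := ih hzt
      exact ⟨j, hj.trans t.lt_succ_self, h⟩

lemma offers_subset_accOffers {k t : ℕ} (hkt : k ≤ t) : offers M P k ⊆ accOffers M P t :=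
  Finset.subset_biUnion_of_mem (fun k => offers M P k)
    (Finset.mem_range.mpr (Nat.lt_succ_of_le hkt))

lemma accOffers_mono {s t : ℕ} (hst : s ≤ t) : accOffers M P s ⊆ accOffers M P t :=
  Finset.biUnion_subset_biUnion_of_subset_left _ (Finset.range_subset_range.mpr (by omega))

lemma accOffers_succ (t : ℕ) :
    accOffers M P (t + 1) = offers M P (t + 1) ∪ accOffers M P t := by
  rw [accOffers, Finset.range_add_one, Finset.biUnion_insert, accOffers]

/-- By substitutability, a contract chosen from all offers so far was chosen at the previous
round too, so it is still on offer. -/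
lemma Ch_accOffers (hsub : ∀ h : H, Substitutable M h) (h : H) (t : ℕ) :
    Ch M h (accOffers M P t) = Ch M h (offers M P t) := by
  induction t with
  | zero => simp [accOffers]
  | succ n ih =>
    refine (Ch_eq_of_subset h (offers_subset_accOffers le_rfl) fun y hy => ?_).symm
    have hyh := xH_of_mem_Ch hy
    have hy' := Ch_subset h _ hy
    rw [accOffers_succ, Finset.mem_union] at hy'
    rcases hy' with hy' | hy'
    · exact hy'
    have hyn : y ∈ Ch M h (offers M P n) :=
      ih ▸ hsub h _ _ (hospPart_mono (accOffers_mono n.le_succ) h)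
        y (mem_hospPart.mpr ⟨hy', hyh⟩) hy
    exact mem_offers_succ (Ch_subset h _ hyn) (mem_CH.mpr (hyh ▸ hyn))

lemma notMem_Ch_accOffers (hsub : ∀ h : H, Substitutable M h) {j s : ℕ} (hjs : j ≤ s) {z : X}
    (hz : z ∈ offers M P j) (hrej : z ∉ CH M (offers M P j)) :
    z ∉ Ch M (M.xH z) (accOffers M P s) := fun hacc =>
  hrej <| mem_CH.mpr <| Ch_accOffers hsub (M.xH z) j ▸
    hsub _ _ _ (hospPart_mono (accOffers_mono hjs) _)
      z (mem_hospPart.mpr ⟨offers_subset_accOffers le_rfl hz, rfl⟩) hacc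

end DeferredAcceptance

section StaticProfile

variable {M : Market D H X}

def demandRank (S Z : Finset X) : ℕ :=
  if Z = S then 2 else if Z = ∅ then 1 else 0

noncomputable abbrev demandPref (S : Finset X) : Pref X :=
  LinearOrder.lift' (fun Z => toLex (demandRank S Z, Fintype.equivFin (Finset X) Z))
    fun _ _ h => (Fintype.equivFin _).injective (congrArg Prod.snd (toLex.injective h))

lemma demandPref_le_of_rank_lt {S Z Z' : Finset X} (h : demandRank S Z < demandRank S Z') :
    (demandPref S).le Z Z' :=
  le_of_lt (Prod.Lex.toLex_lt_toLex.mpr (Or.inl h) :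
    toLex (demandRank S Z, Fintype.equivFin (Finset X) Z) <
      toLex (demandRank S Z', Fintype.equivFin (Finset X) Z'))

lemma Cd_demandPref (S : Finset X) (e : D) (Y : Finset X) :
    Cd M (demandPref S) e Y = if S ∈ allocs M (docPart M Y e) then S else ∅ := by
  refine bestAlloc_eq_of_forall_le _ ?_ fun Z hZ => ?_ <;> split_ifs with hS
  · exact hS
  · exact empty_mem_allocs M _
  · rcases eq_or_ne Z S with rfl | hZS
    · exact (demandPref Z).le_refl Z
    · exact demandPref_le_of_rank_lt (by simp [demandRank, hZS]; split_ifs <;> omega)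
  · rcases eq_or_ne Z ∅ with rfl | hZ0
    · exact (demandPref S).le_refl ∅
    · have hZS : Z ≠ S := by rintro rfl; exact hS hZ
      exact demandPref_le_of_rank_lt (by simp [demandRank, hZS, hZ0]; split_ifs <;> omega)

lemma Cd_demandPref_docPart {W : Finset X} (hW : IsAllocation M W) (e : D) (Y : Finset X) :
    Cd M (demandPref (docPart M W e)) e Y = docPart M (W ∩ Y) e := by
  rw [Cd_demandPref]
  split_ifs with hS
  · ext x
    have := (mem_allocs.mp hS).1 (x := x)
    simp only [mem_docPart, Finset.mem_inter] at this ⊢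
    tauto
  · obtain ⟨c, hcW, hcY⟩ : ∃ c ∈ docPart M W e, c ∉ Y := by
      by_contra! h
      exact hS (mem_allocs.mpr ⟨fun x hx => mem_docPart.mpr ⟨h x hx, (mem_docPart.mp hx).2⟩,
        hW.mono (Finset.filter_subset _ _)⟩)
    refine (Finset.eq_empty_of_forall_notMem fun x hx => hcY ?_).symm
    simp only [mem_docPart, Finset.mem_inter] at hx hcW
    exact hW x hx.1.1 c hcW.1 (hx.2.trans hcW.2.symm) ▸ hx.1.2

variable (M) in
noncomputable abbrev statProfile (d : D) (W : Finset X) (pr : Pref X) : Profile D X :=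
  Function.update (fun e => demandPref (docPart M W e)) d pr

variable (M) in
def attainable (d : D) (W : Finset X) : Finset (Finset X) :=
  insert ∅ ((univ.filter fun z => M.xD z = d ∧ z ∈ Ch M (M.xH z) (insert z W)).image
    fun z => {z})

variable (M) in
noncomputable def bestAttainable (d : D) (W : Finset X) (pr : Pref X) : Finset X :=
  @Finset.max' _ pr (attainable M d W) ⟨∅, Finset.mem_insert_self _ _⟩

lemma empty_mem_attainable (d : D) (W : Finset X) : ∅ ∈ attainable M d W :=
  Finset.mem_insert_self _ _

lemma singleton_mem_attainable {d : D} {W : Finset X} {z : X} (hzd : M.xD z = d)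
    (hz : z ∈ Ch M (M.xH z) (insert z W)) : {z} ∈ attainable M d W :=
  Finset.mem_insert_of_mem (Finset.mem_image_of_mem _ (by simp [hzd, hz]))

lemma mem_attainable {d : D} {W E : Finset X} :
    E ∈ attainable M d W ↔
      E = ∅ ∨ ∃ z, M.xD z = d ∧ z ∈ Ch M (M.xH z) (insert z W) ∧ E = {z} := by
  simp [attainable, and_assoc, eq_comm]

lemma le_Cd_of_attainable {pr : Pref X} {d : D} {W Y : Finset X}
    (hY : ∀ z, M.xD z = d → z ∈ Ch M (M.xH z) (insert z W) → z ∈ Y) {E : Finset X}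
    (hE : E ∈ attainable M d W) : pr.le E (Cd M pr d Y) := by
  rcases mem_attainable.mp hE with rfl | ⟨z, hzd, hz, rfl⟩
  · exact empty_le_Cd pr d Y
  · exact singleton_le_Cd pr (hY z hzd hz) hzd

lemma statProfile_self (d : D) (W : Finset X) (pr : Pref X) : statProfile M d W pr d = pr :=
  Function.update_self ..

lemma offers_statProfile {d : D} {W : Finset X} {pr : Pref X} (hW : IsAllocation M W)
    (hWd : docPart M W d = ∅) (t : ℕ) :
    offers M (statProfile M d W pr) t =
      (W ∩ DDAsets M (statProfile M d W pr) t) ∪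
        Cd M pr d (DDAsets M (statProfile M d W pr) t) := by
  ext x
  rw [offers, mem_CD, Finset.mem_union]
  by_cases hxd : M.xD x = d
  · simp [statProfile, hxd, notMem_of_docPart_eq_empty hWd hxd]
  · have hxCd : x ∉ Cd M pr d (DDAsets M (statProfile M d W pr) t) :=
      fun hx => hxd (xD_of_mem_Cd hx)
    simp only [statProfile] at hxCd ⊢
    simp [hxd, hxCd, Cd_demandPref_docPart hW, mem_docPart]

end StaticProfile

section StaticRun

variable {M : Market D H X} {d : D} {W : Finset X} {pr : Pref X}

lemma offers_statProfile_of_subset (hW : IsAllocation M W) (hWd : docPart M W d = ∅) {t : ℕ}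
    (hWt : W ⊆ DDAsets M (statProfile M d W pr) t) :
    offers M (statProfile M d W pr) t = W ∪ Cd M pr d (DDAsets M (statProfile M d W pr) t) := by
  rw [offers_statProfile hW hWd, Finset.inter_eq_left.mpr hWt]

lemma docOpt_statProfile_of_Cd_eq_empty (hW : IsAllocation M W) (hWd : docPart M W d = ∅)
    (hWIR : CH M W = W) {t : ℕ} (hWt : W ⊆ DDAsets M (statProfile M d W pr) t)
    (hCd : Cd M pr d (DDAsets M (statProfile M d W pr) t) = ∅) :
    docOpt M (statProfile M d W pr) d = ∅ := by
  have hstop : DDAstopped M (statProfile M d W pr) t := by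
    rw [DDAstopped, offers_statProfile_of_subset hW hWd hWt, hCd, Finset.union_empty, hWIR]
  rw [docOpt_eq_of_stopped hstop, statProfile_self, hCd]

/-- The run stops one round later: the next offers are `CH (insert z W)`, a fixed point of
`CH`. -/
lemma docOpt_statProfile_of_accepted (hW : IsAllocation M W) (hWd : docPart M W d = ∅) {t : ℕ}
    (hWt : W ⊆ DDAsets M (statProfile M d W pr) t) {z : X}
    (hCd : Cd M pr d (DDAsets M (statProfile M d W pr) t) = {z})
    (hz : z ∈ Ch M (M.xH z) (insert z W)) :
    docOpt M (statProfile M d W pr) d = {z} := by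
  set P := statProfile M d W pr with hP
  have hoff : offers M P t = insert z W := by
    rw [offers_statProfile_of_subset hW hWd hWt, hCd, Finset.union_singleton]
  have hzC : z ∈ CH M (insert z W) := mem_CH.mpr hz
  have hzX : z ∈ DDAsets M P t := Cd_subset pr d _ (hCd ▸ Finset.mem_singleton_self z)
  have hzX1 : z ∈ DDAsets M P (t + 1) := by simp [DDAsets_succ, hoff, hzX, hzC]
  have hCd1 : Cd M pr d (DDAsets M P (t + 1)) = {z} :=
    (Cd_eq_of_subset pr d (DDAsets_succ_subset t)
      (by rwa [hCd, Finset.singleton_subset_iff])).trans hCd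
  have hoff1 : offers M P (t + 1) = CH M (insert z W) := by
    rw [offers_statProfile hW hWd, hCd1, DDAsets_succ, hoff]
    ext x
    have hxC : x ∈ CH M (insert z W) → x ∈ insert z W := fun h => CH_subset _ h
    have hxW : x ∈ W → x ∈ DDAsets M P t := fun h => hWt h
    simp only [Finset.mem_union, Finset.mem_inter, Finset.mem_sdiff, Finset.mem_insert,
      Finset.mem_singleton] at hxC ⊢
    constructor
    · rintro (⟨hxW', -, hx⟩ | rfl)
      · exact not_and_not_right.mp hx (Or.inr hxW')
      · exact hzC
    · intro hx
      rcases hxC hx with rfl | hxW'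
      · exact Or.inr rfl
      · exact Or.inl ⟨hxW', hxW hxW', fun h => h.2 hx⟩
  have hstop : DDAstopped M P (t + 1) := by
    rw [DDAstopped, hoff1, CH_idem]
  rw [docOpt_eq_of_stopped hstop, hP, statProfile_self]
  exact hCd1

lemma DDAsets_statProfile_succ_of_rejected (hW : IsAllocation M W) (hWd : docPart M W d = ∅)
    (hWIR : CH M W = W) {t : ℕ} (hWt : W ⊆ DDAsets M (statProfile M d W pr) t) {z : X}
    (hCd : Cd M pr d (DDAsets M (statProfile M d W pr) t) = {z})
    (hz : z ∉ Ch M (M.xH z) (insert z W)) :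
    DDAsets M (statProfile M d W pr) (t + 1) = (DDAsets M (statProfile M d W pr) t).erase z := by
  have hzW : z ∉ W :=
    notMem_of_docPart_eq_empty hWd (xD_of_mem_Cd (hCd ▸ Finset.mem_singleton_self z))
  rw [DDAsets_succ, offers_statProfile_of_subset hW hWd hWt, hCd, Finset.union_singleton,
    CH_insert_of_notMem_Ch hz, hWIR, Finset.insert_sdiff_cancel hzW,
    Finset.sdiff_singleton_eq_erase]

/-- Each round either ends the run with an attainable outcome or removes one more
unattainable contract of `d`, so induction on `#X^t` applies. -/
lemma docOpt_statProfile_of_removed (hW : IsAllocation M W) (hWd : docPart M W d = ∅)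
    (hWIR : CH M W = W) (t : ℕ)
    (hrem : ∀ y ∉ DDAsets M (statProfile M d W pr) t,
      M.xD y = d ∧ y ∉ Ch M (M.xH y) (insert y W)) :
    docOpt M (statProfile M d W pr) d ∈ attainable M d W ∧
      ∀ E ∈ attainable M d W, pr.le E (docOpt M (statProfile M d W pr) d) := by
  induction hn : (DDAsets M (statProfile M d W pr) t).card using Nat.strong_induction_on
    generalizing t with
  | _ n ih =>
  have hWt : W ⊆ DDAsets M (statProfile M d W pr) t := fun y hyW => by
    by_contra hy
    exact notMem_of_docPart_eq_empty hWd (hrem y hy).1 hyW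
  have hge : ∀ E ∈ attainable M d W, pr.le E (Cd M pr d (DDAsets M (statProfile M d W pr) t)) :=
    fun E => le_Cd_of_attainable fun z _ hz => by
      by_contra hzX
      exact (hrem z hzX).2 hz
  rcases Cd_eq_empty_or_singleton (M := M) pr d (DDAsets M (statProfile M d W pr) t) with
    hCd | ⟨z, hzX, hzd, hCd⟩
  · rw [docOpt_statProfile_of_Cd_eq_empty hW hWd hWIR hWt hCd, ← hCd]
    exact ⟨hCd ▸ empty_mem_attainable d W, hge⟩
  by_cases hz : z ∈ Ch M (M.xH z) (insert z W)
  · rw [docOpt_statProfile_of_accepted hW hWd hWt hCd hz, ← hCd]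
    exact ⟨hCd ▸ singleton_mem_attainable hzd hz, hge⟩
  have hX1 := DDAsets_statProfile_succ_of_rejected hW hWd hWIR hWt hCd hz
  refine ih _ (hn ▸ hX1 ▸ Finset.card_erase_lt_of_mem hzX) (t + 1) ?_ rfl
  intro y hy
  rw [hX1, Finset.mem_erase, not_and_or, not_not] at hy
  rcases hy with rfl | hy
  · exact ⟨hzd, hz⟩
  · exact hrem y hy

lemma docOpt_statProfile (hW : IsAllocation M W) (hWd : docPart M W d = ∅) (hWIR : CH M W = W) :
    docOpt M (statProfile M d W pr) d = bestAttainable M d W pr := by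
  obtain ⟨hmem, hge⟩ := docOpt_statProfile_of_removed (pr := pr) hW hWd hWIR 0
    (by simp [DDAsets])
  exact pr.le_antisymm _ _ (@Finset.le_max' _ pr _ _ hmem) (@Finset.max'_le _ pr _ _ _ hge)

end StaticRun

section ObviousManipulation

variable {M : Market D H X}

lemma isAllocation_empty : IsAllocation M (∅ : Finset X) := by
  simp [IsAllocation]

lemma docPart_empty (d : D) : docPart M (∅ : Finset X) d = ∅ :=
  Finset.filter_empty _

lemma docPart_CH_eq_empty_of_notMem {Y : Finset X} (hY : IsAllocation M Y) {d : D} {ζ : X}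
    (hζ : ζ ∈ Y) (hζd : M.xD ζ = d) (hrej : ζ ∉ CH M Y) : docPart M (CH M Y) d = ∅ :=
  Finset.eq_empty_of_forall_notMem fun x hx => by
    obtain ⟨hxC, hxd⟩ := mem_docPart.mp hx
    exact hrej (hY x (CH_subset Y hxC) ζ hζ (hxd.trans hζd.symm) ▸ hxC)

lemma docOpt_mem_attainable_empty (hsub : ∀ h : H, Substitutable M h) (P : Profile D X)
    (d : D) : docOpt M P d ∈ attainable M d ∅ := by
  have hstop := DDAstopped_card (M := M) P
  rw [docOpt_eq_of_stopped hstop]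
  rcases Cd_eq_empty_or_singleton (M := M) (P d) d (DDAsets M P (Fintype.card X)) with
    hCd | ⟨x, -, hxd, hCd⟩
  · rw [hCd]
    exact empty_mem_attainable d ∅
  rw [hCd]
  have hxoff : x ∈ offers M P (Fintype.card X) :=
    mem_CD.mpr (by rw [hxd, hCd]; exact Finset.mem_singleton_self x)
  have hxCh : x ∈ Ch M (M.xH x) (offers M P (Fintype.card X)) := mem_CH.mp (by rwa [hstop])
  refine singleton_mem_attainable hxd (hsub _ _ _ (hospPart_mono ?_ _) x ?_ hxCh)
  · simpa using hxoff
  · simp [mem_hospPart]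

lemma notMem_Ch_insert_CH_offers (hsub : ∀ h : H, Substitutable M h) {P : Profile D X}
    {j s : ℕ} (hjs : j ≤ s) {z : X} (hz : z ∈ offers M P j)
    (hrej : z ∉ CH M (offers M P j)) :
    z ∉ Ch M (M.xH z) (insert z (CH M (offers M P s))) := by
  rw [Ch_eq_of_subset (M.xH z) (Y := accOffers M P s)]
  · exact notMem_Ch_accOffers hsub hjs hz hrej
  · exact Finset.insert_subset (offers_subset_accOffers hjs hz)
      ((CH_subset _).trans (offers_subset_accOffers le_rfl))
  · intro y hy
    rw [Ch_accOffers hsub] at hy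
    exact Finset.mem_insert_of_mem (mem_CH.mpr (xH_of_mem_Ch hy ▸ hy))

variable (M) in
def RejectedAt (P : Profile D X) (d : D) (k : ℕ) : Prop :=
  ∃ ζ ∈ offers M P k, M.xD ζ = d ∧ ζ ∉ CH M (offers M P k)

/-- If `d` is ever rejected, the contracts held right after `d`'s last rejection work: every
contract `d` prefers to his outcome was rejected by then, and by substitutability it stays
rejected against them. -/
lemma exists_attainable_le_docOpt (hsub : ∀ h : H, Substitutable M h) (d : D)
    (Q : Profile D X) :
    ∃ W, IsAllocation M W ∧ docPart M W d = ∅ ∧ CH M W = W ∧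
      ∀ E ∈ attainable M d W, (Q d).le E (docOpt M Q d) := by
  classical
  have hstop := DDAstopped_card (M := M) Q
  suffices ∃ W, IsAllocation M W ∧ docPart M W d = ∅ ∧ CH M W = W ∧
      ∀ z j, M.xD z = d → j < Fintype.card X → z ∈ offers M Q j →
        z ∉ CH M (offers M Q j) → z ∉ Ch M (M.xH z) (insert z W) by
    obtain ⟨W, hW, hWd, hWIR, hWrej⟩ := this
    refine ⟨W, hW, hWd, hWIR, fun E hE => ?_⟩
    rw [docOpt_eq_of_stopped hstop]
    rcases mem_attainable.mp hE with rfl | ⟨z, hzd, hz, rfl⟩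
    · exact empty_le_Cd _ _ _
    by_contra hlt
    obtain ⟨j, hj, hzj, hzrej⟩ := exists_rejected_of_notMem_DDAsets fun hzX =>
      hlt (singleton_le_Cd _ hzX hzd)
    exact hWrej z j hzd hj hzj hzrej hz
  by_cases hd : ∃ k ≤ Fintype.card X, RejectedAt M Q d k
  · obtain ⟨k, hk, hkrej⟩ := hd
    obtain ⟨ζ, hζ, hζd, hζrej⟩ := Nat.findGreatest_spec hk hkrej
    exact ⟨_, (isAllocation_CD Q _).mono (CH_subset _),
      docPart_CH_eq_empty_of_notMem (isAllocation_CD Q _) hζ hζd hζrej, CH_idem _,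
      fun z j hzd hj hzj hzrej => notMem_Ch_insert_CH_offers hsub
        (Nat.le_findGreatest (P := RejectedAt M Q d) hj.le ⟨z, hzj, hzd, hzrej⟩) hzj hzrej⟩
  · exact ⟨∅, isAllocation_empty, docPart_empty d, CH_empty,
      fun z j hzd hj hzj hzrej => (hd ⟨j, hj.le, z, hzj, hzd, hzrej⟩).elim⟩

lemma optionSet_nonempty (rule : Profile D X → D → Finset X) (d : D) (Pd : Pref X) :
    (optionSet rule d Pd).Nonempty :=
  ⟨rule (fun _ => Pd) d, fun _ => Pd, rfl, rfl⟩

lemma worstIn_le {pr : Pref X} {S : Set (Finset X)} {a : Finset X} (ha : a ∈ S) :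
    pr.le (worstIn pr S) a := by
  rw [worstIn, dif_pos ⟨a, ha⟩]
  exact @Finset.min'_le _ pr _ _ ((Set.Finite.mem_toFinset _).mpr ha)

lemma worstIn_mem {pr : Pref X} {S : Set (Finset X)} (hS : S.Nonempty) : worstIn pr S ∈ S := by
  rw [worstIn, dif_pos hS]
  exact (Set.Finite.mem_toFinset _).mp (@Finset.min'_mem _ pr _ _)

lemma le_bestIn {pr : Pref X} {S : Set (Finset X)} {a : Finset X} (ha : a ∈ S) :
    pr.le a (bestIn pr S) := by
  rw [bestIn, dif_pos ⟨a, ha⟩]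
  exact @Finset.le_max' _ pr _ _ ((Set.Finite.mem_toFinset _).mpr ha)

lemma bestIn_mem {pr : Pref X} {S : Set (Finset X)} (hS : S.Nonempty) : bestIn pr S ∈ S := by
  rw [bestIn, dif_pos hS]
  exact (Set.Finite.mem_toFinset _).mp (@Finset.max'_mem _ pr _ _)

lemma worstIn_optionSet_docOpt_le (hsub : ∀ h : H, Substitutable M h) (d : D)
    (Pd P'd : Pref X) :
    Pd.le (worstIn Pd (optionSet (docOpt M) d P'd)) (worstIn Pd (optionSet (docOpt M) d Pd)) := by
  obtain ⟨Q, rfl, hQ⟩ := worstIn_mem (pr := Pd) (optionSet_nonempty (docOpt M) d Pd)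
  obtain ⟨W, hW, hWd, hWIR, hle⟩ := exists_attainable_le_docOpt hsub d Q
  rw [hQ]
  refine (Q d).le_trans _ _ _ (worstIn_le ⟨statProfile M d W P'd, statProfile_self .., rfl⟩) ?_
  rw [docOpt_statProfile hW hWd hWIR]
  exact hle _ (@Finset.max'_mem _ P'd _ _)

lemma bestIn_optionSet_docOpt_le (hsub : ∀ h : H, Substitutable M h) (d : D)
    (Pd P'd : Pref X) :
    Pd.le (bestIn Pd (optionSet (docOpt M) d P'd)) (bestIn Pd (optionSet (docOpt M) d Pd)) := by
  obtain ⟨P', -, hB⟩ := bestIn_mem (pr := Pd) (optionSet_nonempty (docOpt M) d P'd)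
  rw [hB]
  refine Pd.le_trans _ _ _ (@Finset.le_max' _ Pd _ _ (docOpt_mem_attainable_empty hsub P' d)) ?_
  change Pd.le (bestAttainable M d ∅ Pd) _
  rw [← docOpt_statProfile isAllocation_empty (docPart_empty d) CH_empty]
  exact le_bestIn ⟨_, statProfile_self .., rfl⟩

end ObviousManipulation

/-- Theorem 1: if every hospital's preference is substitutable, the doctor-optimal rule
is not obviously manipulable. -/
theorem docOpt_NOM (M : Market D H X) (hsub : ∀ h : H, Substitutable M h) :
    NOM (docOpt M) := by
  rintro d Pd P'd ⟨-, hworst | hbest⟩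
  · exact ((Pd.lt_iff_le_not_ge _ _).mp hworst).2 (worstIn_optionSet_docOpt_le hsub d Pd P'd)
  · exact ((Pd.lt_iff_le_not_ge _ _).mp hbest).2 (bestIn_optionSet_docOpt_le hsub d Pd P'd)

end Matching
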